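/- Let β > 0 and p ∈ ℝ. Define φ : (−β, β) → ℝ by φ(v) = 2β ∫₀^v artanh(t/β) dt + p·v. Then v* := −β · tanh(p/(2β)) lies in (−β, β), and for every v ∈ (−β, β) with v ≠ v* one has φ(v*) < φ(v); i.e., φ attains a strict global minimum on (−β, β) uniquely at v* = −β tanh(p/(2β)). -/

import Mathlib

open intervalIntegral

/-- The inverse hyperbolic tangent on (-1, 1). -/
noncomputable def artanh (x : ℝ) : ℝ := Real.log ((1 + x) / (1 - x)) / 2

/-!
Writing `φ(v) = 2β ∫₀^v artanh (t/β) dt + p v`, we have `φ(v) = ∫₀^v g` with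
`g t = 2β artanh (t/β) + p`. On `(-β, β)` the integrand `g` is strictly increasing and, since
`artanh` inverts `tanh`, vanishes at `v* = -β tanh (p/(2β))`. So `g` has the sign of `v - v*`
between `v*` and `v`, and `φ(v) - φ(v*) = ∫_{v*}^v g > 0` for `v ≠ v*`.
-/

lemma artanh_eq_real_artanh {x : ℝ} (hx : x ∈ Set.Icc (-1) 1) : artanh x = Real.artanh x := by
  rw [artanh, Real.artanh_eq_half_log hx]
  ring

lemma strictMonoOn_artanh : StrictMonoOn artanh (Set.Ioo (-1) 1) :=
  Real.strictMonoOn_artanh.congr fun _ hx ↦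
    (artanh_eq_real_artanh (Set.Ioo_subset_Icc_self hx)).symm

lemma artanh_tanh (x : ℝ) : artanh (Real.tanh x) = x := by
  rw [artanh_eq_real_artanh ⟨(Real.neg_one_lt_tanh x).le, (Real.tanh_lt_one x).le⟩,
    Real.artanh_tanh]

lemma integral_const_mul_add_const {f : ℝ → ℝ} {a b : ℝ}
    (hf : IntervalIntegrable f MeasureTheory.volume a b) (c p : ℝ) :
    ∫ t in a..b, (c * f t + p) = c * (∫ t in a..b, f t) + p * (b - a) := by
  rw [integral_add (hf.const_mul c) intervalIntegrable_const, integral_const_mul,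
    integral_const, smul_eq_mul, mul_comm p]

section StrictMonoOn

variable {f : ℝ → ℝ} {s : Set ℝ} [s.OrdConnected]

lemma MonotoneOn.intervalIntegrable_of_mem (hf : MonotoneOn f s) {a b : ℝ} (ha : a ∈ s)
    (hb : b ∈ s) : IntervalIntegrable f MeasureTheory.volume a b :=
  (hf.mono (Set.OrdConnected.uIcc_subset ‹_› ha hb)).intervalIntegrable

lemma StrictMonoOn.integral_pos_of_map_eq_zero (hf : StrictMonoOn f s) {c v : ℝ} (hc : c ∈ s)
    (hv : v ∈ s) (hfc : f c = 0) (hne : v ≠ c) : 0 < ∫ t in c..v, f t := by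
  rcases hne.lt_or_gt with hvc | hcv
  · have hneg : 0 < ∫ t in v..c, -f t := by
      refine intervalIntegral_pos_of_pos_on
        (hf.monotoneOn.intervalIntegrable_of_mem hv hc).neg (fun t ht ↦ ?_) hvc
      have hts : t ∈ s := Set.Icc_subset s hv hc (Set.Ioo_subset_Icc_self ht)
      linarith [hf hts hc ht.2]
    rwa [integral_neg, ← integral_symm] at hneg
  · refine intervalIntegral_pos_of_pos_on
      (hf.monotoneOn.intervalIntegrable_of_mem hc hv) (fun t ht ↦ ?_) hcv
    have hts : t ∈ s := Set.Icc_subset s hc hv (Set.Ioo_subset_Icc_self ht)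
    linarith [hf hc hts ht.1]

lemma StrictMonoOn.integral_lt_integral_of_map_eq_zero (hf : StrictMonoOn f s) {a c v : ℝ}
    (ha : a ∈ s) (hc : c ∈ s) (hv : v ∈ s) (hfc : f c = 0) (hne : v ≠ c) :
    ∫ t in a..c, f t < ∫ t in a..v, f t := by
  rw [← sub_pos, integral_interval_sub_left (hf.monotoneOn.intervalIntegrable_of_mem ha hv)
    (hf.monotoneOn.intervalIntegrable_of_mem ha hc)]
  exact hf.integral_pos_of_map_eq_zero hc hv hfc hne

end StrictMonoOn

section Scaled

variable {β : ℝ}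

lemma strictMonoOn_artanh_div (hβ : 0 < β) :
    StrictMonoOn (fun t ↦ artanh (t / β)) (Set.Ioo (-β) β) := by
  refine strictMonoOn_artanh.comp (fun _ _ _ _ h ↦ div_lt_div_of_pos_right h hβ) ?_
  intro t ht
  constructor
  · rw [lt_div_iff₀ hβ]; linarith [ht.1]
  · rw [div_lt_one hβ]; exact ht.2

lemma neg_mul_tanh_mem_Ioo (hβ : 0 < β) (x : ℝ) : -β * Real.tanh x ∈ Set.Ioo (-β) β := by
  constructor <;> nlinarith [Real.neg_one_lt_tanh x, Real.tanh_lt_one x]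

lemma two_mul_artanh_div_neg_mul_tanh_add_eq_zero (hβ : 0 < β) (p : ℝ) :
    2 * β * artanh (-β * Real.tanh (p / (2 * β)) / β) + p = 0 := by
  rw [neg_mul, neg_div, mul_div_cancel_left₀ _ hβ.ne', ← Real.tanh_neg, artanh_tanh]
  field_simp
  ring

end Scaled

/-- the saturated Hamiltonian term is uniquely minimized at
v* = -β tanh(p/(2β)) (the closed-form optimal control law (15)). -/
theorem hamiltonian_unique_minimizer (β p : ℝ) (hβ : 0 < β) :
    -β * Real.tanh (p / (2 * β)) ∈ Set.Ioo (-β) β ∧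
      ∀ v ∈ Set.Ioo (-β) β, v ≠ -β * Real.tanh (p / (2 * β)) →
        (2 * β * ∫ t in (0:ℝ)..(-β * Real.tanh (p / (2 * β))), artanh (t / β))
            + p * (-β * Real.tanh (p / (2 * β)))
          < (2 * β * ∫ t in (0:ℝ)..v, artanh (t / β)) + p * v := by
  set vs := -β * Real.tanh (p / (2 * β))
  have hvs : vs ∈ Set.Ioo (-β) β := neg_mul_tanh_mem_Ioo hβ _
  refine ⟨hvs, fun v hv hne ↦ ?_⟩
  have h0 : (0 : ℝ) ∈ Set.Ioo (-β) β := ⟨by linarith, hβ⟩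
  have hf := strictMonoOn_artanh_div hβ
  have hg : StrictMonoOn (fun t ↦ 2 * β * artanh (t / β) + p) (Set.Ioo (-β) β) :=
    fun _ hx _ hy hxy ↦ by simpa using mul_lt_mul_of_pos_left (hf hx hy hxy) (by positivity)
  have hlt := hg.integral_lt_integral_of_map_eq_zero h0 hvs hv
    (two_mul_artanh_div_neg_mul_tanh_add_eq_zero hβ p) hne
  rwa [integral_const_mul_add_const (hf.monotoneOn.intervalIntegrable_of_mem h0 hvs),
    integral_const_mul_add_const (hf.monotoneOn.intervalIntegrable_of_mem h0 hv),
    sub_zero, sub_zero] at hlt
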